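/- For every fixed real p > 0, the quantity N^2 · (ψ′((N−p−1)/2) − ψ′((N−1)/2)) tends to 2p as the real number N tends to infinity. -/

import Mathlib

open Filter

/-- Trigamma function `ψ′(x) = d²/dx² log Γ(x)`. -/
noncomputable def trigamma (x : ℝ) : ℝ :=
  deriv (deriv (fun y => Real.log (Real.Gamma y))) x

open Real Set Topology

/-!
For `x > 0`, `ψ′(x) = ∑ₘ (x + m)⁻²`: differentiate the Bohr–Mollerup approximants of `log Γ`
once (their derivatives converge locally uniformly to the digamma series
`-γ + ∑ₘ ((m + 1)⁻¹ - (x + m)⁻¹)`) and then differentiate that series term by term.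

For `0 < y ≤ z`, convexity of `t ↦ t⁻²` puts `y⁻² - z⁻²` between `(z - y) · 2 / z³` and
`(z - y) · 2 / y³`, and `2 / t³` lies between the telescoping differences `t⁻² - (t + 1)⁻²` and
`(t - 1)⁻² - t⁻²`. Summing over `m` gives, for `1 < a ≤ b`,
`(b - a) / b² ≤ ψ′(a) - ψ′(b) ≤ (b - a) / (a - 1)²`.
With `a = (N - p - 1) / 2`, `b = (N - 1) / 2` and `b - a = p / 2`, both bounds times `N²`
tend to `2p`.
-/

theorem summable_inv_add_sq {a : ℝ} (ha : 0 < a) : Summable fun m : ℕ => ((a + m) ^ 2)⁻¹ :=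
  ((summable_one_div_nat_add_rpow a 2).mpr one_lt_two).congr fun m => by
    rw [← rpow_natCast, abs_of_pos (by positivity), one_div, add_comm]
    norm_num

theorem hasDerivAt_logGammaSeq {x : ℝ} (hx : 0 < x) (n : ℕ) :
    HasDerivAt (fun y => BohrMollerup.logGammaSeq y n)
      (log n - ∑ m ∈ Finset.range (n + 1), (x + m)⁻¹) x := by
  have hlin : HasDerivAt (fun y : ℝ => y * log n + log n.factorial) (log n) x := by
    simpa using ((hasDerivAt_id x).mul_const (log n)).add_const (log n.factorial)
  have hlogs : HasDerivAt (fun y : ℝ => ∑ m ∈ Finset.range (n + 1), log (y + m))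
      (∑ m ∈ Finset.range (n + 1), (x + m)⁻¹) x := by
    refine HasDerivAt.fun_sum fun m _ => ?_
    simpa [one_div] using ((hasDerivAt_id x).add_const (m : ℝ)).log (by positivity)
  simpa [BohrMollerup.logGammaSeq] using hlin.fun_sub hlogs

noncomputable def digammaSeries (x : ℝ) : ℝ :=
  -eulerMascheroniConstant + ∑' m : ℕ, (((m : ℝ) + 1)⁻¹ - (x + m)⁻¹)

theorem abs_inv_succ_sub_inv_add_le {a b x : ℝ} (ha : 0 < a) (hx : x ∈ Icc a b) (m : ℕ) :
    |((m : ℝ) + 1)⁻¹ - (x + m)⁻¹| ≤ (b + 1) * ((min a 1 + m) ^ 2)⁻¹ := by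
  obtain ⟨hax, hxb⟩ := hx
  have hx0 : 0 < x := ha.trans_le hax
  have hc : 0 < min a 1 := lt_min ha one_pos
  have hm : (0 : ℝ) ≤ m := m.cast_nonneg
  have hden : (min a 1 + m) ^ 2 ≤ (m + 1) * (x + m) := by
    rw [sq]
    exact mul_le_mul (by linarith [min_le_right a 1]) (by linarith [min_le_left a 1])
      (by positivity) (by linarith)
  rw [inv_sub_inv (by positivity) (by positivity), abs_div,
    abs_of_pos (by positivity : (0 : ℝ) < (m + 1) * (x + m)), div_le_iff₀ (by positivity)]
  calc |x + m - (m + 1)| ≤ b + 1 := by rw [abs_le]; constructor <;> linarith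
    _ = (b + 1) * ((min a 1 + m) ^ 2)⁻¹ * (min a 1 + m) ^ 2 := by field_simp
    _ ≤ (b + 1) * ((min a 1 + m) ^ 2)⁻¹ * ((m + 1) * (x + m)) := by
      gcongr
      have : 0 < b := hx0.trans_le hxb
      positivity

theorem tendstoUniformlyOn_digammaSeries {a b : ℝ} (ha : 0 < a) :
    TendstoUniformlyOn (fun (n : ℕ) (x : ℝ) => log n - ∑ m ∈ Finset.range (n + 1), (x + m)⁻¹)
      digammaSeries atTop (Icc a b) := by
  have hconst : Tendsto (fun n : ℕ => log n - harmonic (n + 1)) atTop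
      (𝓝 (-eulerMascheroniConstant)) := by
    have h := (tendsto_harmonic_sub_log.neg).sub tendsto_one_div_add_atTop_nhds_zero_nat
    simp only [sub_zero] at h
    refine h.congr fun n => ?_
    push_cast [harmonic_succ]
    ring
  have hseries : TendstoUniformlyOn
      (fun (n : ℕ) (x : ℝ) => ∑ m ∈ Finset.range (n + 1), (((m : ℝ) + 1)⁻¹ - (x + m)⁻¹))
      (fun x => ∑' m : ℕ, (((m : ℝ) + 1)⁻¹ - (x + m)⁻¹)) atTop (Icc a b) := fun v hv =>
    (tendsto_add_atTop_nat 1).eventually <|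
      tendstoUniformlyOn_tsum_nat ((summable_inv_add_sq (lt_min ha one_pos)).mul_left (b + 1))
        (fun m x hx => abs_inv_succ_sub_inv_add_le ha hx m) v hv
  -- `log n - H (n + 1) → -γ` absorbs the divergent part of `∑ₘ (x + m)⁻¹`.
  refine ((hconst.tendstoUniformlyOn_const _).add hseries).congr
    (Eventually.of_forall fun n x _ => ?_)
  simp only [Pi.add_apply, harmonic, Finset.sum_sub_distrib]
  push_cast
  ring

theorem hasDerivAt_log_Gamma {x : ℝ} (hx : 0 < x) :
    HasDerivAt (fun y => log (Gamma y)) (digammaSeries x) x := by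
  refine hasDerivAt_of_tendstoLocallyUniformlyOn isOpen_Ioi
    (tendstoLocallyUniformlyOn_of_forall_exists_nhds fun y (hy : 0 < y) => ?_)
    (Eventually.of_forall fun n y hy => hasDerivAt_logGammaSeq hy n)
    (fun y hy => BohrMollerup.tendsto_log_gamma hy) hx
  exact ⟨Icc (y / 2) (y + 1),
    mem_nhdsWithin_of_mem_nhds (Icc_mem_nhds (by linarith) (by linarith)),
    tendstoUniformlyOn_digammaSeries (by positivity)⟩

theorem hasDerivAt_digammaSeries {x : ℝ} (hx : 0 < x) :
    HasDerivAt digammaSeries (∑' m : ℕ, ((x + m) ^ 2)⁻¹) x := by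
  have hsum : Summable fun m : ℕ => ((m : ℝ) + 1)⁻¹ - (x + m)⁻¹ :=
    .of_norm_bounded ((summable_inv_add_sq (lt_min hx one_pos)).mul_left (x + 1))
      fun m => abs_inv_succ_sub_inv_add_le hx ⟨le_rfl, le_rfl⟩ m
  have hderiv : ∀ (m : ℕ) (y : ℝ), y ∈ Ioi (x / 2) →
      HasDerivAt (fun z : ℝ => ((m : ℝ) + 1)⁻¹ - (z + m)⁻¹) ((y + m) ^ 2)⁻¹ y := by
    intro m y hy
    have hpos : 0 < y + m := by have : 0 < y := (half_pos hx).trans hy; positivity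
    simpa [neg_div] using
      (((hasDerivAt_id y).add_const (m : ℝ)).inv hpos.ne').const_sub ((m : ℝ) + 1)⁻¹
  have hbound : ∀ (m : ℕ) (y : ℝ), y ∈ Ioi (x / 2) →
      ‖((y + m) ^ 2)⁻¹‖ ≤ ((x / 2 + m) ^ 2)⁻¹ := by
    intro m y hy
    have : 0 < x / 2 + m := by positivity
    rw [norm_of_nonneg (by positivity)]
    gcongr
    exact (mem_Ioi.mp hy).le
  have hx2 : x ∈ Ioi (x / 2) := half_lt_self hx
  exact (hasDerivAt_tsum_of_isPreconnected (summable_inv_add_sq (half_pos hx)) isOpen_Ioi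
    isPreconnected_Ioi hderiv hbound hx2 hsum hx2).const_add _

theorem trigamma_eq_tsum {x : ℝ} (hx : 0 < x) : trigamma x = ∑' m : ℕ, ((x + m) ^ 2)⁻¹ := by
  have h : deriv (fun y => log (Gamma y)) =ᶠ[𝓝 x] digammaSeries := by
    filter_upwards [isOpen_Ioi.mem_nhds hx] with y hy
    exact (hasDerivAt_log_Gamma hy).deriv
  rw [trigamma, h.deriv_eq, (hasDerivAt_digammaSeries hx).deriv]

theorem mul_inv_sq_sub_inv_sq_succ_le {y z : ℝ} (hy : 0 < y) (hyz : y ≤ z) :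
    (z - y) * ((z ^ 2)⁻¹ - ((z + 1) ^ 2)⁻¹) ≤ (y ^ 2)⁻¹ - (z ^ 2)⁻¹ := by
  have hz : 0 < z := hy.trans_le hyz
  have htel : (z ^ 2)⁻¹ - ((z + 1) ^ 2)⁻¹ ≤ 2 / z ^ 3 := by
    rw [inv_sub_inv (by positivity) (by positivity), div_le_div_iff₀ (by positivity)
      (by positivity)]
    nlinarith [mul_nonneg (sq_nonneg z) (by positivity : (0 : ℝ) ≤ 3 * z + 2)]
  have hconv : (z - y) * (2 / z ^ 3) ≤ (y ^ 2)⁻¹ - (z ^ 2)⁻¹ := by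
    rw [inv_sub_inv (by positivity) (by positivity), mul_div_assoc', div_le_div_iff₀
      (by positivity) (by positivity)]
    nlinarith [mul_nonneg (mul_nonneg (sq_nonneg (z - y)) (sq_nonneg z))
      (by positivity : (0 : ℝ) ≤ z + 2 * y)]
  exact (mul_le_mul_of_nonneg_left htel (sub_nonneg.mpr hyz)).trans hconv

theorem inv_sq_sub_inv_sq_le_mul {y z : ℝ} (hy : 1 < y) (hyz : y ≤ z) :
    (y ^ 2)⁻¹ - (z ^ 2)⁻¹ ≤ (z - y) * (((y - 1) ^ 2)⁻¹ - (y ^ 2)⁻¹) := by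
  have hy0 : 0 < y := one_pos.trans hy
  have hy1 : 0 < y - 1 := sub_pos.mpr hy
  have hz : 0 < z := hy0.trans_le hyz
  have hconv : (y ^ 2)⁻¹ - (z ^ 2)⁻¹ ≤ (z - y) * (2 / y ^ 3) := by
    rw [inv_sub_inv (by positivity) (by positivity), mul_div_assoc', div_le_div_iff₀
      (by positivity) (by positivity)]
    nlinarith [mul_nonneg (mul_nonneg (sq_nonneg (z - y)) (sq_nonneg y))
      (by positivity : (0 : ℝ) ≤ 2 * z + y)]
  have htel : 2 / y ^ 3 ≤ ((y - 1) ^ 2)⁻¹ - (y ^ 2)⁻¹ := by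
    rw [inv_sub_inv (by positivity) (by positivity), div_le_div_iff₀ (by positivity)
      (by positivity)]
    nlinarith [mul_nonneg (sq_nonneg y) (by linarith : (0 : ℝ) ≤ 3 * y - 2)]
  exact hconv.trans (mul_le_mul_of_nonneg_left htel (sub_nonneg.mpr hyz))

theorem hasSum_inv_sq_sub_inv_sq_succ {c : ℝ} (hc : 0 < c) :
    HasSum (fun m : ℕ => ((c + m) ^ 2)⁻¹ - ((c + m + 1) ^ 2)⁻¹) (c ^ 2)⁻¹ := by
  refine (hasSum_iff_tendsto_nat_of_nonneg (fun m => ?_) _).mpr ?_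
  · exact sub_nonneg.mpr <| inv_anti₀ (by positivity) <|
      pow_le_pow_left₀ (by positivity) (by linarith) 2
  · have htel : ∀ n : ℕ, ∑ m ∈ Finset.range n, (((c + m) ^ 2)⁻¹ - ((c + m + 1) ^ 2)⁻¹) =
        (c ^ 2)⁻¹ - ((c + n) ^ 2)⁻¹ := fun n => by
      simpa [add_assoc] using Finset.sum_range_sub' (fun m : ℕ => ((c + m) ^ 2)⁻¹) n
    simp only [htel]
    have : Tendsto (fun n : ℕ => ((c + n) ^ 2)⁻¹) atTop (𝓝 0) :=
      tendsto_inv_atTop_zero.comp <| (tendsto_pow_atTop two_ne_zero).comp <|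
        tendsto_atTop_add_const_left _ c tendsto_natCast_atTop_atTop
    simpa using this.const_sub ((c ^ 2)⁻¹)

theorem hasSum_trigamma_sub {a b : ℝ} (ha : 0 < a) (hb : 0 < b) :
    HasSum (fun m : ℕ => ((a + m) ^ 2)⁻¹ - ((b + m) ^ 2)⁻¹) (trigamma a - trigamma b) := by
  rw [trigamma_eq_tsum ha, trigamma_eq_tsum hb]
  exact (summable_inv_add_sq ha).hasSum.sub (summable_inv_add_sq hb).hasSum

theorem div_sq_le_trigamma_sub {a b : ℝ} (ha : 0 < a) (hab : a ≤ b) :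
    (b - a) / b ^ 2 ≤ trigamma a - trigamma b := by
  have hb : 0 < b := ha.trans_le hab
  have hterm : ∀ m : ℕ, (b - a) * (((b + m) ^ 2)⁻¹ - ((b + m + 1) ^ 2)⁻¹) ≤
      ((a + m) ^ 2)⁻¹ - ((b + m) ^ 2)⁻¹ := fun m => by
    have h := mul_inv_sq_sub_inv_sq_succ_le (by positivity : 0 < a + m)
      (by linarith : a + m ≤ b + m)
    rwa [show b + m - (a + m) = b - a by ring] at h
  simpa [div_eq_mul_inv] using hasSum_le hterm
    ((hasSum_inv_sq_sub_inv_sq_succ hb).mul_left (b - a)) (hasSum_trigamma_sub ha hb)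

theorem trigamma_sub_le_div_sq {a b : ℝ} (ha : 1 < a) (hab : a ≤ b) :
    trigamma a - trigamma b ≤ (b - a) / (a - 1) ^ 2 := by
  have hterm : ∀ m : ℕ, ((a + m) ^ 2)⁻¹ - ((b + m) ^ 2)⁻¹ ≤
      (b - a) * (((a - 1 + m) ^ 2)⁻¹ - ((a - 1 + m + 1) ^ 2)⁻¹) := fun m => by
    have h := inv_sq_sub_inv_sq_le_mul (by linarith [m.cast_nonneg (α := ℝ)] : 1 < a + m)
      (by linarith : a + m ≤ b + m)
    exact h.trans_eq (by ring)
  simpa [div_eq_mul_inv] using hasSum_le hterm (hasSum_trigamma_sub (by linarith) (by linarith))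
    ((hasSum_inv_sq_sub_inv_sq_succ (sub_pos.mpr ha)).mul_left (b - a))

theorem tendsto_sq_mul_div_sq_sub (q c : ℝ) :
    Tendsto (fun N : ℝ => N ^ 2 * (q / ((N - c) / 2) ^ 2)) atTop (𝓝 (4 * q)) := by
  have hlim : Tendsto (fun N : ℝ => 1 - c / N) atTop (𝓝 1) := by
    simpa using (tendsto_const_nhds (x := (1 : ℝ))).sub
      ((tendsto_const_nhds (x := c)).div_atTop tendsto_id)
  have h : Tendsto (fun N : ℝ => 4 * q * ((1 - c / N) ^ 2)⁻¹) atTop (𝓝 (4 * q)) := by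
    simpa using ((hlim.pow 2).inv₀ (by norm_num)).const_mul (4 * q)
  refine h.congr' ?_
  filter_upwards [eventually_gt_atTop c, eventually_gt_atTop 0] with N hNc hN0
  have : N - c ≠ 0 := sub_ne_zero.mpr hNc.ne'
  field_simp
  ring

theorem stmt_11 (p : ℝ) (hp : 0 < p) :
    Tendsto
      (fun N : ℝ => N ^ 2 * (trigamma ((N - p - 1) / 2) - trigamma ((N - 1) / 2)))
      atTop (nhds (2 * p)) := by
  have hlim (c : ℝ) :
      Tendsto (fun N : ℝ => N ^ 2 * (p / 2 / ((N - c) / 2) ^ 2)) atTop (𝓝 (2 * p)) := by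
    simpa [show 4 * (p / 2) = 2 * p by ring] using tendsto_sq_mul_div_sq_sub (p / 2) c
  have hab (N : ℝ) : (N - p - 1) / 2 ≤ (N - 1) / 2 := by linarith
  refine tendsto_of_tendsto_of_tendsto_of_le_of_le' (hlim 1) (hlim (p + 3)) ?_ ?_ <;>
    filter_upwards [eventually_gt_atTop (p + 3)] with N hN <;>
    refine mul_le_mul_of_nonneg_left ?_ (sq_nonneg N)
  · exact (le_of_eq (by ring)).trans (div_sq_le_trigamma_sub (by linarith) (hab N))
  · exact (trigamma_sub_le_div_sq (by linarith) (hab N)).trans_eq (by ring)
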